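/- arXiv:2405.12738 — 3 statements merged into one kernel-verified Lean document; each statement's English description precedes it below -/
import Mathlib

section
/- The sequence of discrete measures μ_n = δ_{(1/b_1)D_1} ∗ δ_{(1/(b_1b_2))D_2} ∗ ⋯ ∗ δ_{(1/(b_1⋯b_n))D_n} converges weakly to a Borel probability measure μ_{b,D} if and only if ∑_{n=1}^∞ N_n/(b_1b_2⋯b_n) < ∞. In this case, μ_{b,D} is supported on the compact set T(b,D) = { ∑_{n=1}^∞ d_n/(b_1b_2⋯b_n) : d_n ∈ D_n for each n }. -/
open MeasureTheory Filter Complex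

/-- The equally-weighted (uniform) probability measure on a finite set `E ⊆ ℝ`. -/
noncomputable def unifD (E : Finset ℝ) : Measure ℝ :=
  (E.card : ENNReal)⁻¹ • ∑ e ∈ E, Measure.dirac e

/-- Iterated convolutions `ν_n = δ_{A 1} ∗ ⋯ ∗ δ_{A n}` (with `ν_0 = δ_0`). -/
noncomputable def convSeq (A : ℕ → Finset ℝ) : ℕ → Measure ℝ
  | 0 => Measure.dirac 0
  | n + 1 => (convSeq A n).conv (unifD (A (n + 1)))

/-- Weak convergence of a sequence of measures on ℝ: integrals of bounded continuous
functions converge. -/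
def WeakTendsto (μs : ℕ → Measure ℝ) (μ : Measure ℝ) : Prop :=
  ∀ f : BoundedContinuousFunction ℝ ℝ,
    Tendsto (fun n => ∫ x, f x ∂(μs n)) atTop (nhds (∫ x, f x ∂μ))

/-- The scaled digit set `(1/(b_1 ⋯ b_k)) D_k` where `D_k = {0, 1, …, N_k - 1}`. -/
noncomputable def digitSet (b N : ℕ → ℕ) (k : ℕ) : Finset ℝ :=
  (Finset.range (N k)).image fun j : ℕ => (j : ℝ) / ∏ i ∈ Finset.Icc 1 k, (b i : ℝ)

/-- `μ_n = δ_{(1/b_1)D_1} ∗ ⋯ ∗ δ_{(1/(b_1⋯b_n))D_n}`. -/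
noncomputable def moran (b N : ℕ → ℕ) : ℕ → Measure ℝ :=
  convSeq (digitSet b N)

/-- `moranBlock b N k n = δ_{(1/(b_1⋯b_k))D_k} ∗ ⋯ ∗ δ_{(1/(b_1⋯b_n))D_n}`
(equal to `δ_0` when `n < k`). -/
noncomputable def moranBlock (b N : ℕ → ℕ) (k : ℕ) : ℕ → Measure ℝ
  | 0 => Measure.dirac 0
  | n + 1 =>
    if k ≤ n + 1 then (moranBlock b N k n).conv (unifD (digitSet b N (n + 1)))
    else Measure.dirac 0

/-- The exponential `x ↦ e^{2πiλx}` as an element of `L²(μ)` (defined to be `0`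
in the degenerate case where it is not in `L²`, which never happens for a
finite measure). -/
noncomputable def expLp (μ : Measure ℝ) (l : ℝ) : Lp ℂ 2 μ := by
  classical
  exact if h : MemLp (fun x : ℝ => Complex.exp (2 * Real.pi * Complex.I * l * x)) 2 μ
    then h.toLp _ else 0

/-- `Λ` is a spectrum of `μ`: it is countable and the exponentials `e^{2πiλx}`, `λ ∈ Λ`,
form an orthonormal basis (orthonormal with dense span) of `L²(μ)`. -/
def IsSpectrum (μ : Measure ℝ) (Λ : Set ℝ) : Prop :=
  Λ.Countable ∧ Orthonormal ℂ (fun l : Λ => expLp μ l) ∧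
    ⊤ ≤ (Submodule.span ℂ (Set.range fun l : Λ => expLp μ l)).topologicalClosure

/-- `μ` is a spectral measure. -/
def IsSpectralMeasure (μ : Measure ℝ) : Prop :=
  ∃ Λ : Set ℝ, IsSpectrum μ Λ

/-- The Fourier transform `μ̂(ξ) = ∫ e^{-2πiξx} dμ(x)`. -/
noncomputable def ft (μ : Measure ℝ) (ξ : ℝ) : ℂ :=
  ∫ x, Complex.exp (-(2 * Real.pi * Complex.I * ξ * x)) ∂μ

/-- The zero set `Z(μ̂)`. -/
def zeroSet (μ : Measure ℝ) : Set ℝ := {ξ : ℝ | ft μ ξ = 0}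

/-!
Realise `μ_n` as the law of the partial sum `∑_{k<n} ω_k` under the product of the uniform
measures on the scaled digit sets. If `∑ N_n/(b_1⋯b_n) < ∞`, the partial sums converge for almost
every `ω`, dominated convergence gives weak convergence to the law of `∑_k ω_k`, and this law is
carried by `T(b,D)`, the continuous image of the compact cube of digit sequences. Conversely,
`∫ e^{-x} dμ_n` is the product over `k ≤ n` of the averages of `e^{-j/(b_1⋯b_k)}` over the digits
`j`, each at most `1 - (1 - e^{-N_k/(b_1⋯b_k)})/4`. If the series diverges this product tends
to `0`, which forces `∫ e^{-|x|} dμ = 0` for the weak limit `μ`, impossible for a probability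
measure.
-/

open ProbabilityTheory Topology Finset
open scoped ENNReal

lemma lintegral_exp_neg_conv (μ ν : Measure ℝ) [SFinite ν] :
    ∫⁻ x, ENNReal.ofReal (Real.exp (-x)) ∂(μ ∗ ν) =
      (∫⁻ x, ENNReal.ofReal (Real.exp (-x)) ∂μ) * ∫⁻ x, ENNReal.ofReal (Real.exp (-x)) ∂ν := by
  rw [Measure.lintegral_conv (by fun_prop), ← lintegral_mul_const _ (by fun_prop)]
  refine lintegral_congr fun x => ?_
  simp_rw [neg_add, Real.exp_add, ENNReal.ofReal_mul (Real.exp_pos _).le]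
  exact lintegral_const_mul _ (by fun_prop)

lemma map_sum_range_succ_infinitePi (ν : ℕ → Measure ℝ) [∀ k, IsProbabilityMeasure (ν k)]
    (n : ℕ) :
    (Measure.infinitePi ν).map (fun ω => ∑ k ∈ range (n + 1), ω k) =
      (Measure.infinitePi ν).map (fun ω => ∑ k ∈ range n, ω k) ∗ ν n := by
  have hindep : IndepFun (fun ω : ℕ → ℝ => ∑ k ∈ range n, ω k) (fun ω => ω n)
      (Measure.infinitePi ν) := by
    simpa only [Finset.sum_fn, id_eq] using
      (iIndepFun_infinitePi (X := fun _ => id) fun _ => measurable_id).indepFun_finsetSum_of_notMem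
        (fun k => measurable_pi_apply k) (s := range n) (i := n) (by simp)
  rw [← Measure.infinitePi_map_eval ν n,
    ← hindep.map_add_eq_map_conv_map (by fun_prop) (by fun_prop)]
  congr 1
  ext ω
  simp [sum_range_succ]

lemma WeakTendsto.unique {μs : ℕ → Measure ℝ} {μ ν : Measure ℝ} [IsFiniteMeasure μ]
    [IsFiniteMeasure ν] (hμ : WeakTendsto μs μ) (hν : WeakTendsto μs ν) : μ = ν :=
  ext_of_forall_integral_eq_of_IsFiniteMeasure fun f => tendsto_nhds_unique (hμ f) (hν f)

section UniformMeasure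

variable {E : Finset ℝ}

lemma lintegral_unifD (f : ℝ → ℝ≥0∞) : ∫⁻ x, f x ∂unifD E = (#E : ℝ≥0∞)⁻¹ * ∑ e ∈ E, f e := by
  simp [unifD]

lemma isProbabilityMeasure_unifD (hE : E.Nonempty) : IsProbabilityMeasure (unifD E) := by
  constructor
  simp [unifD, ENNReal.inv_mul_cancel, hE.ne_empty]

instance (E : Finset ℝ) : IsFiniteMeasure (unifD E) := by
  obtain rfl | hE := E.eq_empty_or_nonempty
  · simp only [unifD, sum_empty, smul_zero]
    infer_instance
  · have := isProbabilityMeasure_unifD hE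
    infer_instance

lemma ae_mem_unifD : ∀ᵐ x ∂unifD E, x ∈ E := by
  simp [ae_iff, unifD]

end UniformMeasure

lemma convSeq_eq_map_sum (A : ℕ → Finset ℝ) [∀ k, IsProbabilityMeasure (unifD (A (k + 1)))]
    (n : ℕ) :
    convSeq A n =
      (Measure.infinitePi fun k => unifD (A (k + 1))).map fun ω => ∑ k ∈ range n, ω k := by
  induction n with
  | zero => simp [convSeq, Measure.map_const]
  | succ n ih => rw [map_sum_range_succ_infinitePi, ← ih, convSeq]

lemma lintegral_exp_neg_convSeq (A : ℕ → Finset ℝ) (n : ℕ) :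
    ∫⁻ x, ENNReal.ofReal (Real.exp (-x)) ∂convSeq A n =
      ∏ k ∈ range n, ∫⁻ x, ENNReal.ofReal (Real.exp (-x)) ∂unifD (A (k + 1)) := by
  induction n with
  | zero => simp [convSeq]
  | succ n ih => rw [convSeq, lintegral_exp_neg_conv, ih, prod_range_succ]

lemma one_sub_exp_neg_nonneg {x : ℝ} (hx : 0 ≤ x) : 0 ≤ 1 - Real.exp (-x) := by
  simpa using Real.exp_le_one_iff.2 (neg_nonpos.2 hx)

lemma exp_neg_mul_le {s : ℝ} (hs₀ : 0 ≤ s) (hs₁ : s ≤ 1) (u : ℝ) :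
    Real.exp (-(s * u)) ≤ 1 - s * (1 - Real.exp (-u)) := by
  have := convexOn_exp.2 (Set.mem_univ 0) (Set.mem_univ (-u)) (by linarith : 0 ≤ 1 - s) hs₀
    (by ring)
  simp only [smul_eq_mul, mul_zero, zero_add, Real.exp_zero, mul_one] at this
  rw [← mul_neg]
  linarith

lemma sum_range_exp_neg_div_le {n : ℕ} (hn : 2 ≤ n) {p : ℝ} (hp : 0 ≤ p) :
    (∑ j ∈ range n, Real.exp (-(j / p))) / n ≤ 1 - (1 - Real.exp (-(n / p))) / 4 := by
  have hn' : (2 : ℝ) ≤ n := by exact_mod_cast hn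
  have hgap : 0 ≤ 1 - Real.exp (-(n / p)) := one_sub_exp_neg_nonneg (by positivity)
  have hterm : ∀ j ∈ range n,
      Real.exp (-(j / p)) ≤ 1 - (j / n : ℝ) * (1 - Real.exp (-(n / p))) := fun j hj => by
    have hj : (j : ℝ) ≤ n := by exact_mod_cast (mem_range.1 hj).le
    convert exp_neg_mul_le (by positivity) (div_le_one_of_le₀ hj (by positivity)) (n / p)
      using 3
    field_simp
  have hgauss : ∑ j ∈ range n, (j : ℝ) = n * (n - 1) / 2 := by
    rw [eq_div_iff two_ne_zero]
    have := sum_range_id_mul_two n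
    have : ((∑ j ∈ range n, j : ℕ) : ℝ) * 2 = n * (n - 1) := by
      rw [← Nat.cast_ofNat, ← Nat.cast_mul, this, Nat.cast_mul, Nat.cast_sub (by omega),
        Nat.cast_one]
    simpa using this
  have hsum : ∑ j ∈ range n, Real.exp (-(j / p)) ≤ n - (n - 1) / 2 * (1 - Real.exp (-(n / p))) :=
    calc _ ≤ ∑ j ∈ range n, (1 - (j / n : ℝ) * (1 - Real.exp (-(n / p)))) := sum_le_sum hterm
      _ = _ := by
        rw [sum_sub_distrib, ← sum_mul, ← sum_div, hgauss]
        field_simp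
        simp
  rw [div_le_iff₀ (by positivity)]
  nlinarith

lemma summable_of_summable_one_sub_exp_neg {x : ℕ → ℝ} (hx : ∀ k, 0 ≤ x k)
    (h : Summable fun k => 1 - Real.exp (-x k)) : Summable x := by
  refine Summable.of_norm_bounded_eventually_nat (h.mul_left 2) ?_
  filter_upwards [h.tendsto_atTop_zero.eventually (ge_mem_nhds (by norm_num : (0 : ℝ) < 1 / 2))]
    with k hk
  have hexp : Real.exp (x k) * Real.exp (-x k) = 1 := by rw [← Real.exp_add]; simp
  have hle : Real.exp (x k) ≤ 2 := by nlinarith [Real.exp_pos (x k)]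
  rw [Real.norm_of_nonneg (hx k)]
  nlinarith [Real.add_one_le_exp (x k),
    mul_le_mul_of_nonneg_right hle (one_sub_exp_neg_nonneg (hx k))]

lemma tendsto_prod_one_sub_of_not_summable {a : ℕ → ℝ} (h₀ : ∀ k, 0 ≤ a k) (h₁ : ∀ k, a k ≤ 1)
    (h : ¬Summable a) : Tendsto (fun n => ∏ k ∈ range n, (1 - a k)) atTop (𝓝 0) := by
  refine squeeze_zero (fun n => prod_nonneg fun k _ => sub_nonneg.2 (h₁ k)) (fun n => ?_)
    (Real.tendsto_exp_atBot.comp (tendsto_neg_atTop_atBot.comp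
      ((not_summable_iff_tendsto_nat_atTop_of_nonneg h₀).1 h)))
  calc ∏ k ∈ range n, (1 - a k) ≤ ∏ k ∈ range n, Real.exp (-a k) :=
        prod_le_prod (fun k _ => sub_nonneg.2 (h₁ k)) fun k _ => Real.one_sub_le_exp_neg _
    _ = Real.exp (-∑ k ∈ range n, a k) := by rw [← sum_neg_distrib, Real.exp_sum]

namespace CantorMoran

variable {b N : ℕ → ℕ}

lemma norm_le_of_mem_digitSet {k : ℕ} {x : ℝ} (hx : x ∈ digitSet b N k) :
    ‖x‖ ≤ N k / ∏ i ∈ Icc 1 k, (b i : ℝ) := by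
  obtain ⟨j, hj, rfl⟩ := mem_image.1 hx
  rw [Real.norm_of_nonneg (by positivity)]
  gcongr
  exact_mod_cast (mem_range.1 hj).le

lemma lintegral_exp_neg_unifD_digitSet_le {k : ℕ} (hp : 0 < ∏ i ∈ Icc 1 k, (b i : ℝ))
    (hN : 2 ≤ N k) :
    ∫⁻ x, ENNReal.ofReal (Real.exp (-x)) ∂unifD (digitSet b N k) ≤
      ENNReal.ofReal (1 - (1 - Real.exp (-(N k / ∏ i ∈ Icc 1 k, (b i : ℝ)))) / 4) := by
  have hinj : Set.InjOn (fun j : ℕ => (j : ℝ) / ∏ i ∈ Icc 1 k, (b i : ℝ)) (range (N k)) :=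
    fun i _ j _ hij => by simpa [hp.ne'] using hij
  rw [lintegral_unifD, digitSet, card_image_of_injOn hinj, card_range, sum_image hinj,
    ← ENNReal.ofReal_sum_of_nonneg fun _ _ => (Real.exp_pos _).le, ← ENNReal.ofReal_natCast,
    ← ENNReal.ofReal_inv_of_pos (by positivity), ← ENNReal.ofReal_mul (by positivity),
    inv_mul_eq_div]
  exact ENNReal.ofReal_le_ofReal (sum_range_exp_neg_div_le hN hp.le)

noncomputable def expNegAbs : BoundedContinuousFunction ℝ ℝ :=
  BoundedContinuousFunction.ofNormedAddCommGroup (fun x => Real.exp (-|x|)) (by fun_prop) 1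
    fun x => by simp [abs_of_pos (Real.exp_pos _)]

lemma expNegAbs_pos (x : ℝ) : 0 < expNegAbs x := Real.exp_pos _

lemma integral_expNegAbs_moran_le (hb : ∀ n, 1 ≤ n → 0 < b n) (hN : ∀ n, 1 ≤ n → 2 ≤ N n)
    (n : ℕ) :
    ∫ x, expNegAbs x ∂moran b N n ≤
      ∏ k ∈ range n, (1 - (1 - Real.exp (-(N (k + 1) / ∏ i ∈ Icc 1 (k + 1), (b i : ℝ)))) / 4) := by
  have hp : ∀ k, 0 < ∏ i ∈ Icc 1 k, (b i : ℝ) := fun k =>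
    prod_pos fun i hi => by exact_mod_cast hb i (mem_Icc.1 hi).1
  have hfactor : ∀ k ∈ range n,
      0 ≤ 1 - (1 - Real.exp (-(N (k + 1) / ∏ i ∈ Icc 1 (k + 1), (b i : ℝ)))) / 4 := fun k _ => by
    linarith [Real.exp_pos (-(N (k + 1) / ∏ i ∈ Icc 1 (k + 1), (b i : ℝ)))]
  rw [integral_eq_lintegral_of_nonneg_ae (ae_of_all _ fun x => (expNegAbs_pos x).le)
    expNegAbs.continuous.aestronglyMeasurable]
  refine ENNReal.toReal_le_of_le_ofReal (prod_nonneg hfactor) ?_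
  calc ∫⁻ x, ENNReal.ofReal (expNegAbs x) ∂moran b N n
      ≤ ∫⁻ x, ENNReal.ofReal (Real.exp (-x)) ∂convSeq (digitSet b N) n :=
        lintegral_mono fun x =>
          ENNReal.ofReal_le_ofReal (Real.exp_le_exp.2 (neg_le_neg (le_abs_self x)))
    _ = ∏ k ∈ range n, ∫⁻ x, ENNReal.ofReal (Real.exp (-x)) ∂unifD (digitSet b N (k + 1)) :=
        lintegral_exp_neg_convSeq _ n
    _ ≤ _ := prod_le_prod' fun k _ => lintegral_exp_neg_unifD_digitSet_le (hp _) (hN _ (by omega))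
    _ = _ := (ENNReal.ofReal_prod_of_nonneg hfactor).symm

lemma summable_of_weakTendsto (hb : ∀ n, 1 ≤ n → 0 < b n) (hN : ∀ n, 1 ≤ n → 2 ≤ N n)
    {μ : Measure ℝ} [IsProbabilityMeasure μ] (hw : WeakTendsto (moran b N) μ) :
    Summable fun n : ℕ => (N (n + 1) : ℝ) / ∏ i ∈ Icc 1 (n + 1), (b i : ℝ) := by
  by_contra hns
  set a : ℕ → ℝ := fun k => (1 - Real.exp (-(N (k + 1) / ∏ i ∈ Icc 1 (k + 1), (b i : ℝ)))) / 4
  have ha₀ : ∀ k, 0 ≤ a k := fun k =>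
    div_nonneg (one_sub_exp_neg_nonneg (by positivity)) (by norm_num)
  have ha₁ : ∀ k, a k ≤ 1 := fun k => by
    simp only [a]
    linarith [Real.exp_pos (-(N (k + 1) / ∏ i ∈ Icc 1 (k + 1), (b i : ℝ)))]
  have hna : ¬Summable a := fun h => hns <| summable_of_summable_one_sub_exp_neg
    (fun k => by positivity) ((summable_div_const_iff (by norm_num : (4 : ℝ) ≠ 0)).1 h)
  have hpos : 0 < ∫ x, expNegAbs x ∂μ := by
    rw [integral_pos_iff_support_of_nonneg (fun x => (expNegAbs_pos x).le)
      (expNegAbs.integrable μ), Function.support_eq_univ fun x => (expNegAbs_pos x).ne']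
    simp
  exact hpos.not_ge (le_of_tendsto_of_tendsto' (hw expNegAbs)
    (tendsto_prod_one_sub_of_not_summable ha₀ ha₁ hna) (integral_expNegAbs_moran_le hb hN))

def cantorSet (b N : ℕ → ℕ) : Set ℝ :=
  {x : ℝ | ∃ d : ℕ → ℕ, (∀ n, 1 ≤ n → d n < N n) ∧
    HasSum (fun n : ℕ => (d (n + 1) : ℝ) / ∏ i ∈ Icc 1 (n + 1), (b i : ℝ)) x}

def digitCube (b N : ℕ → ℕ) : Set (ℕ → ℝ) := Set.univ.pi fun k => ↑(digitSet b N (k + 1))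

lemma isCompact_digitCube : IsCompact (digitCube b N) :=
  isCompact_univ_pi fun k => (digitSet b N (k + 1)).finite_toSet.isCompact

section Summable

variable (hs : Summable fun n : ℕ => (N (n + 1) : ℝ) / ∏ i ∈ Icc 1 (n + 1), (b i : ℝ))
include hs

lemma summable_of_mem_digitCube {ω : ℕ → ℝ} (hω : ω ∈ digitCube b N) : Summable ω :=
  Summable.of_norm_bounded hs fun k => norm_le_of_mem_digitSet (hω k trivial)

lemma image_tsum_digitCube : (fun ω : ℕ → ℝ => ∑' k, ω k) '' digitCube b N = cantorSet b N := by
  ext x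
  constructor
  · rintro ⟨ω, hω, rfl⟩
    choose d hd hdω using fun k => mem_image.1 (hω k trivial)
    refine ⟨fun n => d (n - 1), fun n hn => ?_, ?_⟩
    · obtain ⟨m, rfl⟩ := Nat.exists_eq_add_of_le' hn
      simpa using hd m
    · simpa [hdω] using (summable_of_mem_digitCube hs hω).hasSum
  · rintro ⟨d, hd, hx⟩
    exact ⟨fun k => d (k + 1) / ∏ i ∈ Icc 1 (k + 1), (b i : ℝ),
      fun k _ => mem_image.2 ⟨d (k + 1), mem_range.2 (hd _ (by omega)), rfl⟩, hx.tsum_eq⟩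

lemma isCompact_cantorSet : IsCompact (cantorSet b N) := by
  rw [← image_tsum_digitCube hs]
  exact isCompact_digitCube.image_of_continuousOn <| continuousOn_tsum
    (fun k => (continuous_apply k).continuousOn) hs fun k ω hω =>
      norm_le_of_mem_digitSet (hω k trivial)

end Summable

variable [∀ k, IsProbabilityMeasure (unifD (digitSet b N (k + 1)))]

variable (b N) in
noncomputable def digitMeasure : Measure (ℕ → ℝ) :=
  Measure.infinitePi fun k => unifD (digitSet b N (k + 1))

instance : IsProbabilityMeasure (digitMeasure b N) := by
  unfold digitMeasure
  infer_instance

lemma ae_mem_digitCube : ∀ᵐ ω ∂digitMeasure b N, ω ∈ digitCube b N := by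
  simp only [digitCube, Set.mem_pi, Set.mem_univ, true_implies]
  exact ae_all_iff.2 fun k =>
    (measurePreserving_eval_infinitePi _ k).quasiMeasurePreserving.ae ae_mem_unifD

lemma moran_eq_map (n : ℕ) :
    moran b N n = (digitMeasure b N).map fun ω => ∑ k ∈ range n, ω k :=
  convSeq_eq_map_sum _ n

variable (b N) in
noncomputable def cantorMoranMeasure : Measure ℝ :=
  (digitMeasure b N).map fun ω => ∑' k, ω k

section Summable

variable (hs : Summable fun n : ℕ => (N (n + 1) : ℝ) / ∏ i ∈ Icc 1 (n + 1), (b i : ℝ))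
include hs

lemma ae_tendsto_sum_range :
    ∀ᵐ ω ∂digitMeasure b N, Tendsto (fun n => ∑ k ∈ range n, ω k) atTop (𝓝 (∑' k, ω k)) :=
  ae_mem_digitCube.mono fun _ hω => (summable_of_mem_digitCube hs hω).hasSum.tendsto_sum_nat

lemma aemeasurable_tsum : AEMeasurable (fun ω : ℕ → ℝ => ∑' k, ω k) (digitMeasure b N) :=
  aemeasurable_of_tendsto_metrizable_ae' (fun n => (by fun_prop : Measurable _).aemeasurable)
    (ae_tendsto_sum_range hs)

lemma isProbabilityMeasure_cantorMoranMeasure : IsProbabilityMeasure (cantorMoranMeasure b N) :=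
  Measure.isProbabilityMeasure_map (aemeasurable_tsum hs)

lemma weakTendsto_moran : WeakTendsto (moran b N) (cantorMoranMeasure b N) := fun f => by
  have hmoran : ∀ n, ∫ x, f x ∂moran b N n = ∫ ω, f (∑ k ∈ range n, ω k) ∂digitMeasure b N :=
    fun n => by
      rw [moran_eq_map, integral_map (by fun_prop) f.continuous.aestronglyMeasurable]
  simp only [hmoran, cantorMoranMeasure,
    integral_map (aemeasurable_tsum hs) f.continuous.aestronglyMeasurable]
  exact tendsto_integral_of_dominated_convergence (fun _ => ‖f‖)
    (fun n => (f.continuous.measurable.comp (by fun_prop)).aestronglyMeasurable)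
    (integrable_const _) (fun n => ae_of_all _ fun ω => f.norm_coe_le_norm _)
    ((ae_tendsto_sum_range hs).mono fun ω h => (f.continuous.tendsto _).comp h)

lemma cantorMoranMeasure_compl_cantorSet : cantorMoranMeasure b N (cantorSet b N)ᶜ = 0 := by
  rw [← mem_ae_iff]
  refine (ae_map_iff (aemeasurable_tsum hs) (isCompact_cantorSet hs).isClosed.measurableSet).2 ?_
  filter_upwards [ae_mem_digitCube] with ω hω
  exact (image_tsum_digitCube hs).subset (Set.mem_image_of_mem _ hω)

end Summable

end CantorMoran

open CantorMoran

theorem stmt_0 (b N : ℕ → ℕ) (hb : ∀ n, 1 ≤ n → 2 ≤ b n) (hN : ∀ n, 1 ≤ n → 2 ≤ N n) :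
    ((∃ μ : Measure ℝ, IsProbabilityMeasure μ ∧ WeakTendsto (moran b N) μ) ↔
      Summable fun n : ℕ => (N (n + 1) : ℝ) / ∏ i ∈ Finset.Icc 1 (n + 1), (b i : ℝ)) ∧
    ∀ μ : Measure ℝ, IsProbabilityMeasure μ → WeakTendsto (moran b N) μ →
      IsCompact {x : ℝ | ∃ d : ℕ → ℕ, (∀ n, 1 ≤ n → d n < N n) ∧
          HasSum (fun n : ℕ => (d (n + 1) : ℝ) / ∏ i ∈ Finset.Icc 1 (n + 1), (b i : ℝ)) x} ∧
        μ {x : ℝ | ∃ d : ℕ → ℕ, (∀ n, 1 ≤ n → d n < N n) ∧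
          HasSum (fun n : ℕ => (d (n + 1) : ℝ) / ∏ i ∈ Finset.Icc 1 (n + 1), (b i : ℝ)) x}ᶜ = 0 := by
  have hb₀ : ∀ n, 1 ≤ n → 0 < b n := fun n hn => two_pos.trans_le (hb n hn)
  have : ∀ k, IsProbabilityMeasure (unifD (digitSet b N (k + 1))) := fun k =>
    isProbabilityMeasure_unifD <|
      (nonempty_range_iff.2 (by have := hN (k + 1) (by omega); omega)).image _
  refine ⟨⟨fun ⟨μ, _, hw⟩ => summable_of_weakTendsto hb₀ hN hw,
    fun hs => ⟨_, isProbabilityMeasure_cantorMoranMeasure hs, weakTendsto_moran hs⟩⟩,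
    fun μ _ hw => ?_⟩
  have hs := summable_of_weakTendsto hb₀ hN hw
  have := isProbabilityMeasure_cantorMoranMeasure hs
  rw [hw.unique (weakTendsto_moran hs)]
  exact ⟨isCompact_cantorSet hs, cantorMoranMeasure_compl_cantorSet hs⟩
end

section
/- The following are equivalent: (a) for every n ≥ 1, the sums d_n + b_n d_{n−1} + b_{n−1}b_n d_{n−2} + ⋯ + b_2⋯b_n d_1 with d_j ∈ D_j are pairwise distinct and the set D_n = D_n + b_nD_{n−1} + ⋯ + b_2⋯b_nD_1 is an integer tile; (b) N_n divides b_n for every n ≥ 2. -/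
open MeasureTheory Filter Complex

/-- `F ⊆ ℤ` is an integer tile: for some `B ⊆ ℤ`, every integer `z` has a unique
representation `z = f + t` with `f ∈ F` and `t ∈ B`. -/
def IsIntegerTile (F : Set ℤ) : Prop :=
  ∃ B : Set ℤ, ∀ z : ℤ, ∃! p : ℤ × ℤ, p.1 ∈ F ∧ p.2 ∈ B ∧ z = p.1 + p.2

/-- The sum `d_n + b_n d_{n-1} + ⋯ + b_2⋯b_n d_1 = ∑_{j=1}^n (∏_{i=j+1}^n b_i) d_j`. -/
def iterSum (b : ℕ → ℕ) (n : ℕ) (d : ℕ → ℕ) : ℤ :=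
  ∑ j ∈ Finset.Icc 1 n, (∏ i ∈ Finset.Icc (j + 1) n, (b i : ℤ)) * (d j : ℤ)

/-- The iterated digit set `𝐃_n = D_n + b_n D_{n-1} + ⋯ + b_2⋯b_n D_1 ⊆ ℤ`. -/
def bigD (b N : ℕ → ℕ) (n : ℕ) : Set ℤ :=
  {z : ℤ | ∃ d : ℕ → ℕ, (∀ j ∈ Finset.Icc 1 n, d j < N j) ∧ z = iterSum b n d}

/-!
Write `𝐃_{n+1} = [0, N_{n+1}) + b_{n+1} 𝐃_n`. If `b_{n+1} = N_{n+1} q`, a complement `B` of `𝐃_n`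
in `ℤ` lifts to the complement `N_{n+1} [0, q) + b_{n+1} B` of `𝐃_{n+1}` (reduce mod `N_{n+1}`,
then mod `q`), and `N_{n+1} ≤ b_{n+1}` makes the expansions unique. Conversely, if `𝐃_{n+1}` has
unique expansions and a complement `B`, then `[0, N_{n+1})` has the complement `b_{n+1} 𝐃_n + B`.
A complement of an interval of length `N` lies in a single residue class mod `N`, and since
`0, 1 ∈ 𝐃_n` this complement contains both `t` and `b_{n+1} + t` for any `t ∈ B`.
-/

open Set
open scoped Pointwise

theorem Int.eq_and_eq_of_add_mul_eq {m r r' k k' : ℤ} (hr : r ∈ Ico 0 m) (hr' : r' ∈ Ico 0 m)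
    (h : r + m * k = r' + m * k') : r = r' ∧ k = k' := by
  have hm : 0 < m := hr.1.trans_lt hr.2
  obtain ⟨hk, hr⟩ := (Int.ediv_emod_unique hm).mpr ⟨h, hr.1, hr.2⟩
  obtain ⟨hk', hr'⟩ := (Int.ediv_emod_unique hm).mpr ⟨rfl, hr'.1, hr'.2⟩
  exact ⟨hr.symm.trans hr', hk.symm.trans hk'⟩

namespace AddSubgroup

theorem isComplement_iff_exists_add_eq_and_unique {G : Type*} [AddGroup G] {S T : Set G} :
    IsComplement S T ↔ (∀ g, ∃ s ∈ S, ∃ t ∈ T, s + t = g) ∧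
      ∀ s ∈ S, ∀ s' ∈ S, ∀ t ∈ T, ∀ t' ∈ T, s + t = s' + t' → s = s' ∧ t = t' := by
  rw [IsComplement, Function.Bijective, and_comm]
  refine and_congr (by simp [Function.Surjective]) ⟨?_, ?_⟩
  · intro h s hs s' hs' t ht t' ht' e
    simpa using @h (⟨s, hs⟩, ⟨t, ht⟩) (⟨s', hs'⟩, ⟨t', ht'⟩) e
  · rintro h ⟨⟨s, hs⟩, ⟨t, ht⟩⟩ ⟨⟨s', hs'⟩, ⟨t', ht'⟩⟩ e
    obtain ⟨rfl, rfl⟩ := h s hs s' hs' t ht t' ht' e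
    rfl

variable {G : Type*} [AddCommGroup G] {S T U : Set G}

theorem IsComplement.symm (h : IsComplement S T) : IsComplement T S := by
  obtain ⟨hex, huniq⟩ := isComplement_iff_exists_add_eq_and_unique.mp h
  refine isComplement_iff_exists_add_eq_and_unique.mpr ⟨fun g => ?_, ?_⟩
  · obtain ⟨s, hs, t, ht, rfl⟩ := hex g
    exact ⟨t, ht, s, hs, add_comm t s⟩
  · intro t ht t' ht' s hs s' hs' e
    rw [add_comm t, add_comm t'] at e
    exact (huniq s hs s' hs' t ht t' ht' e).symm

theorem IsComplement.of_add_left (h : IsComplement (S + U) T)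
    (hSU : ∀ s ∈ S, ∀ s' ∈ S, ∀ u ∈ U, ∀ u' ∈ U, s + u = s' + u' → s = s' ∧ u = u') :
    IsComplement S (U + T) := by
  obtain ⟨hex, huniq⟩ := isComplement_iff_exists_add_eq_and_unique.mp h
  refine isComplement_iff_exists_add_eq_and_unique.mpr ⟨fun g => ?_, ?_⟩
  · obtain ⟨-, ⟨s, hs, u, hu, rfl⟩, t, ht, rfl⟩ := hex g
    exact ⟨s, hs, u + t, add_mem_add hu ht, (add_assoc s u t).symm⟩
  · rintro s hs s' hs' - ⟨u, hu, t, ht, rfl⟩ - ⟨u', hu', t', ht', rfl⟩ e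
    rw [← add_assoc, ← add_assoc] at e
    obtain ⟨hsu, rfl⟩ := huniq _ (add_mem_add hs hu) _ (add_mem_add hs' hu') t ht t' ht' e
    obtain ⟨rfl, rfl⟩ := hSU s hs s' hs' u hu u' hu' hsu
    exact ⟨rfl, rfl⟩

theorem IsComplement.Ico_add_image_mul {N : ℤ} (hN : 0 < N) {A B : Set ℤ}
    (h : IsComplement A B) : IsComplement (Ico 0 N + (N * ·) '' A) ((N * ·) '' B) := by
  obtain ⟨hex, huniq⟩ := isComplement_iff_exists_add_eq_and_unique.mp h
  refine isComplement_iff_exists_add_eq_and_unique.mpr ⟨fun g => ?_, ?_⟩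
  · obtain ⟨a, ha, t, ht, hat⟩ := hex (g / N)
    refine ⟨g % N + N * a, add_mem_add ?_ (mem_image_of_mem _ ha), N * t, mem_image_of_mem _ ht, ?_⟩
    · exact ⟨Int.emod_nonneg g hN.ne', Int.emod_lt_of_pos g hN⟩
    · rw [add_assoc, ← mul_add, hat, Int.emod_add_mul_ediv]
  · rintro - ⟨r, hr, -, ⟨a, ha, rfl⟩, rfl⟩ - ⟨r', hr', -, ⟨a', ha', rfl⟩, rfl⟩
      - ⟨t, ht, rfl⟩ - ⟨t', ht', rfl⟩ e
    simp only [add_assoc, ← mul_add] at e ⊢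
    obtain ⟨rfl, hsum⟩ := Int.eq_and_eq_of_add_mul_eq hr hr' e
    obtain ⟨rfl, rfl⟩ := huniq a ha a' ha' t ht t' ht' hsum
    exact ⟨rfl, rfl⟩

theorem IsComplement.exists_Ico_add_image_mul {N b : ℤ} (hN : 0 < N) (hb : 0 < b)
    (hNb : N ∣ b) {A B : Set ℤ} (h : IsComplement A B) :
    ∃ C, IsComplement (Ico 0 N + (b * ·) '' A) C := by
  obtain ⟨q, rfl⟩ := hNb
  have hq : 0 < q := pos_of_mul_pos_right hb hN.le
  have hcomp : (N * q * ·) '' A = (N * ·) '' ((q * ·) '' A) := by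
    rw [image_image]; simp only [mul_assoc]
  rw [hcomp]
  exact ⟨_, (h.symm.Ico_add_image_mul hq).symm.Ico_add_image_mul hN⟩

theorem IsComplement.dvd_sub_of_Ico {N : ℤ} {C : Set ℤ} (h : IsComplement (Ico 0 N) C)
    {c c' : ℤ} (hc : c ∈ C) (hc' : c' ∈ C) : N ∣ c' - c := by
  obtain ⟨hex, huniq⟩ := isComplement_iff_exists_add_eq_and_unique.mp h
  have eq_of_mem {c c' : ℤ} (hc : c ∈ C) (hc' : c' ∈ C) (h0 : 0 ≤ c' - c) (hN : c' - c < N) :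
      c' = c :=
    (huniq _ ⟨h0, hN⟩ 0 ⟨le_rfl, h0.trans_lt hN⟩ c hc c' hc' (by ring)).2.symm
  have add_mem {c : ℤ} (hc : c ∈ C) : c + N ∈ C := by
    obtain ⟨a, ⟨ha0, haN⟩, c'', hc'', e⟩ := hex (c + N)
    obtain rfl : a = 0 := by
      by_contra ha
      have := eq_of_mem hc hc'' (by omega) (by omega)
      omega
    rwa [← e, zero_add]
  have sub_mem {c : ℤ} (hc : c ∈ C) : c - N ∈ C := by
    obtain ⟨a, ⟨ha0, haN⟩, c'', hc'', e⟩ := hex (c - 1)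
    obtain rfl : a = N - 1 := by
      by_contra ha
      have := eq_of_mem hc'' hc (by omega) (by omega)
      omega
    rwa [show c - N = c'' by omega]
  have add_mul_mem (k : ℤ) : c' + N * k ∈ C := by
    induction k using Int.induction_on with
    | zero => simpa using hc'
    | succ k ih => simpa [mul_add, add_assoc] using add_mem ih
    | pred k ih => convert sub_mem ih using 1; ring
  have hN : 0 < N := by
    obtain ⟨a, ha⟩ := h.nonempty_left
    exact ha.1.trans_lt ha.2
  -- `c' - N ⌊(c' - c) / N⌋ ∈ C` lies in `[c, c + N)`
  have hdiv := Int.emod_add_mul_ediv (c' - c) N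
  have := eq_of_mem hc (add_mul_mem (-((c' - c) / N)))
    (by linarith [Int.emod_nonneg (c' - c) hN.ne']) (by linarith [Int.emod_lt_of_pos (c' - c) hN])
  exact Int.dvd_of_emod_eq_zero (by linarith)

end AddSubgroup

open AddSubgroup

theorem isIntegerTile_iff {F : Set ℤ} : IsIntegerTile F ↔ ∃ B, IsComplement F B := by
  refine exists_congr fun B => ?_
  rw [isComplement_iff_exists_add_eq_and_unique]
  constructor
  · intro h
    refine ⟨fun z => ?_, fun s hs s' hs' t ht t' ht' e => ?_⟩
    · obtain ⟨⟨s, t⟩, ⟨hs, ht, rfl⟩, -⟩ := h z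
      exact ⟨s, hs, t, ht, rfl⟩
    · obtain ⟨p, -, hp⟩ := h (s + t)
      exact Prod.ext_iff.mp ((hp (s, t) ⟨hs, ht, rfl⟩).trans (hp (s', t') ⟨hs', ht', e⟩).symm)
  · rintro ⟨hex, huniq⟩ z
    obtain ⟨s, hs, t, ht, rfl⟩ := hex z
    exact ⟨(s, t), ⟨hs, ht, rfl⟩, fun ⟨s', t'⟩ ⟨hs', ht', e⟩ =>
      Prod.ext_iff.mpr ⟨(huniq s hs s' hs' t ht t' ht' e).1.symm,
        (huniq s hs s' hs' t ht t' ht' e).2.symm⟩⟩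

def IsDigitSeq (N : ℕ → ℕ) (n : ℕ) (d : ℕ → ℕ) : Prop :=
  ∀ j ∈ Finset.Icc 1 n, d j < N j

def UniqueDigits (b N : ℕ → ℕ) (n : ℕ) : Prop :=
  ∀ d d' : ℕ → ℕ, IsDigitSeq N n d → IsDigitSeq N n d' →
    iterSum b n d = iterSum b n d' → ∀ j ∈ Finset.Icc 1 n, d j = d' j

section Digits

variable {b N : ℕ → ℕ} {n : ℕ}

theorem IsDigitSeq.of_succ {d : ℕ → ℕ} (hd : IsDigitSeq N (n + 1) d) : IsDigitSeq N n d :=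
  fun j hj => hd j (Finset.Icc_subset_Icc_right n.le_succ hj)

theorem IsDigitSeq.update {d : ℕ → ℕ} (hd : IsDigitSeq N n d) {a : ℕ} (ha : a < N (n + 1)) :
    IsDigitSeq N (n + 1) (Function.update d (n + 1) a) := by
  intro j hj
  rcases eq_or_ne j (n + 1) with rfl | hjn
  · simpa using ha
  · rw [Function.update_of_ne hjn]
    exact hd j (Finset.mem_Icc.mpr ⟨(Finset.mem_Icc.mp hj).1, by grind⟩)

theorem iterSum_zero (d : ℕ → ℕ) : iterSum b 0 d = 0 := by
  simp [iterSum]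

theorem iterSum_congr {d d' : ℕ → ℕ} (h : ∀ j ∈ Finset.Icc 1 n, d j = d' j) :
    iterSum b n d = iterSum b n d' :=
  Finset.sum_congr rfl fun j hj => by rw [h j hj]

theorem iterSum_succ (d : ℕ → ℕ) :
    iterSum b (n + 1) d = d (n + 1) + b (n + 1) * iterSum b n d := by
  unfold iterSum
  rw [Finset.sum_Icc_succ_top (by omega), Finset.Icc_eq_empty_of_lt (Nat.lt_succ_self _),
    Finset.prod_empty, one_mul, add_comm, Finset.mul_sum]
  refine congrArg _ (Finset.sum_congr rfl fun j hj => ?_)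
  rw [Finset.prod_Icc_succ_top (by grind)]
  ring

theorem iterSum_update_succ (d : ℕ → ℕ) (a : ℕ) :
    iterSum b (n + 1) (Function.update d (n + 1) a) = a + b (n + 1) * iterSum b n d := by
  rw [iterSum_succ, Function.update_self,
    iterSum_congr fun j hj => Function.update_of_ne (by grind) _ _]

theorem bigD_zero : bigD b N 0 = {0} := by
  ext z
  exact ⟨fun ⟨d, _, hz⟩ => hz.trans (iterSum_zero d),
    fun hz => ⟨0, by simp, by rw [mem_singleton_iff.mp hz, iterSum_zero]⟩⟩

theorem bigD_succ :
    bigD b N (n + 1) = Ico 0 (N (n + 1) : ℤ) + ((b (n + 1) : ℤ) * ·) '' bigD b N n := by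
  ext z
  simp only [Set.mem_add, mem_image]
  constructor
  · rintro ⟨d, hd, rfl⟩
    exact ⟨d (n + 1), ⟨by positivity, by exact_mod_cast hd (n + 1) (by simp)⟩,
      _, ⟨iterSum b n d, ⟨d, IsDigitSeq.of_succ hd, rfl⟩, rfl⟩, (iterSum_succ d).symm⟩
  · rintro ⟨r, ⟨hr0, hrN⟩, -, ⟨-, ⟨d, hd, rfl⟩, rfl⟩, rfl⟩
    obtain ⟨a, rfl⟩ := Int.eq_ofNat_of_zero_le hr0
    exact ⟨_, IsDigitSeq.update hd (by exact_mod_cast hrN), (iterSum_update_succ d a).symm⟩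

theorem zero_mem_bigD (hN : ∀ j, 1 ≤ j → 0 < N j) : (0 : ℤ) ∈ bigD b N n :=
  ⟨0, fun j hj => hN j (Finset.mem_Icc.mp hj).1, by simp [iterSum]⟩

theorem one_mem_bigD (hN : ∀ j, 1 ≤ j → 1 < N j) (hn : n ≠ 0) : (1 : ℤ) ∈ bigD b N n := by
  obtain ⟨m, rfl⟩ := Nat.exists_eq_succ_of_ne_zero hn
  rw [bigD_succ]
  exact ⟨1, ⟨zero_le_one, by exact_mod_cast hN _ (by omega)⟩,
    0, ⟨0, zero_mem_bigD fun j hj => zero_lt_one.trans (hN j hj), mul_zero _⟩, add_zero 1⟩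

theorem uniqueDigits_one : UniqueDigits b N 1 := by
  intro d d' _ _ e j hj
  obtain rfl : j = 1 := by simpa using hj
  simpa [iterSum_succ, iterSum_zero] using e

theorem UniqueDigits.succ (h : UniqueDigits b N n) (hNb : N (n + 1) ≤ b (n + 1)) :
    UniqueDigits b N (n + 1) := by
  intro d d' hd hd' e j hj
  rw [iterSum_succ, iterSum_succ] at e
  have last_mem {d : ℕ → ℕ} (hd : IsDigitSeq N (n + 1) d) :
      (d (n + 1) : ℤ) ∈ Ico 0 (b (n + 1) : ℤ) :=
    ⟨by positivity, by exact_mod_cast (hd (n + 1) (by simp)).trans_le hNb⟩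
  obtain ⟨hlast, hrest⟩ := Int.eq_and_eq_of_add_mul_eq (last_mem hd) (last_mem hd') e
  obtain ⟨hj1, hjn⟩ := Finset.mem_Icc.mp hj
  rcases hjn.lt_or_eq with hjn | rfl
  · exact h d d' hd.of_succ hd'.of_succ hrest j (Finset.mem_Icc.mpr ⟨hj1, by omega⟩)
  · exact_mod_cast hlast

theorem UniqueDigits.eq_and_eq_of_add_eq (h : UniqueDigits b N (n + 1)) :
    ∀ s ∈ Ico 0 (N (n + 1) : ℤ), ∀ s' ∈ Ico 0 (N (n + 1) : ℤ),
      ∀ u ∈ ((b (n + 1) : ℤ) * ·) '' bigD b N n, ∀ u' ∈ ((b (n + 1) : ℤ) * ·) '' bigD b N n,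
        s + u = s' + u' → s = s' ∧ u = u' := by
  rintro s ⟨hs0, hsN⟩ s' ⟨hs0', hsN'⟩ - ⟨-, ⟨d, hd, rfl⟩, rfl⟩ - ⟨-, ⟨d', hd', rfl⟩, rfl⟩ e
  obtain ⟨a, rfl⟩ := Int.eq_ofNat_of_zero_le hs0
  obtain ⟨a', rfl⟩ := Int.eq_ofNat_of_zero_le hs0'
  have ha := h _ _ (IsDigitSeq.update hd (by exact_mod_cast hsN))
    (IsDigitSeq.update hd' (by exact_mod_cast hsN'))
    (by simpa only [iterSum_update_succ] using e) (n + 1) (by simp)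
  simp only [Function.update_self] at ha
  subst ha
  exact ⟨rfl, add_left_cancel e⟩

theorem uniqueDigits_of_dvd (hb : ∀ n, 1 ≤ n → 0 < b n) (hdvd : ∀ n, 2 ≤ n → N n ∣ b n)
    (hn : 1 ≤ n) : UniqueDigits b N n := by
  induction n, hn using Nat.le_induction with
  | base => exact uniqueDigits_one
  | succ n hn ih => exact ih.succ (Nat.le_of_dvd (hb _ (by omega)) (hdvd _ (by omega)))

theorem isIntegerTile_bigD_of_dvd (hb : ∀ n, 1 ≤ n → 0 < b n) (hN : ∀ n, 1 ≤ n → 0 < N n)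
    (hdvd : ∀ n, 2 ≤ n → N n ∣ b n) (hn : 1 ≤ n) : IsIntegerTile (bigD b N n) := by
  rw [isIntegerTile_iff]
  induction n, hn using Nat.le_induction with
  | base =>
    have h := (isComplement_singleton_univ (g := (0 : ℤ))).Ico_add_image_mul
      (by exact_mod_cast hN 1 le_rfl : (0 : ℤ) < N 1)
    rw [image_singleton, mul_zero] at h
    rw [bigD_succ, bigD_zero, image_singleton, mul_zero]
    exact ⟨_, h⟩
  | succ n hn ih =>
    obtain ⟨B, hB⟩ := ih
    rw [bigD_succ]
    exact hB.exists_Ico_add_image_mul (by exact_mod_cast hN _ (by omega))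
      (by exact_mod_cast hb _ (by omega)) (by exact_mod_cast hdvd _ (by omega))

theorem dvd_of_uniqueDigits_of_isIntegerTile (hN : ∀ j, 1 ≤ j → 1 < N j) (hn : n ≠ 0)
    (hu : UniqueDigits b N (n + 1)) (ht : IsIntegerTile (bigD b N (n + 1))) :
    N (n + 1) ∣ b (n + 1) := by
  obtain ⟨B, hB⟩ := isIntegerTile_iff.mp ht
  rw [bigD_succ] at hB
  obtain ⟨t, ht⟩ := hB.nonempty_right
  have h0 : t ∈ ((b (n + 1) : ℤ) * ·) '' bigD b N n + B :=
    ⟨0, ⟨0, zero_mem_bigD fun j hj => zero_lt_one.trans (hN j hj), mul_zero _⟩, t, ht, zero_add t⟩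
  have h1 : b (n + 1) + t ∈ ((b (n + 1) : ℤ) * ·) '' bigD b N n + B :=
    ⟨_, ⟨1, one_mem_bigD hN hn, mul_one _⟩, t, ht, rfl⟩
  have hC := hB.of_add_left hu.eq_and_eq_of_add_eq
  exact Int.natCast_dvd_natCast.mp <| by simpa using hC.dvd_sub_of_Ico h0 h1

end Digits

theorem stmt_16 (b N : ℕ → ℕ) (hb : ∀ n, 1 ≤ n → 2 ≤ b n) (hN : ∀ n, 1 ≤ n → 2 ≤ N n) :
    (∀ n, 1 ≤ n →
        (∀ d d' : ℕ → ℕ, (∀ j ∈ Finset.Icc 1 n, d j < N j) →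
            (∀ j ∈ Finset.Icc 1 n, d' j < N j) →
            iterSum b n d = iterSum b n d' → ∀ j ∈ Finset.Icc 1 n, d j = d' j) ∧
          IsIntegerTile (bigD b N n)) ↔
      ∀ n, 2 ≤ n → N n ∣ b n := by
  have hb_pos : ∀ n, 1 ≤ n → 0 < b n := fun n hn => by linarith [hb n hn]
  have hN_pos : ∀ n, 1 ≤ n → 0 < N n := fun n hn => by linarith [hN n hn]
  constructor
  · intro h n hn
    obtain ⟨m, rfl⟩ := Nat.exists_eq_add_of_le' hn
    exact dvd_of_uniqueDigits_of_isIntegerTile hN (by omega) (h _ (by omega)).1 (h _ (by omega)).2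
  · exact fun hdvd n hn =>
      ⟨uniqueDigits_of_dvd hb_pos hdvd hn, isIntegerTile_bigD_of_dvd hb_pos hN_pos hdvd hn⟩
end

section
/- Let ν and ω be Borel probability measures on ℝ with compact support, neither of which is a Dirac point mass, and let μ = ν ∗ ω. If a countable set Λ ⊂ ℝ is a bi-zero set of ν, then Λ is also a bi-zero set of μ, but Λ is not a spectrum of μ. -/
open MeasureTheory Filter Complex

open scoped Real

/-! Since `(ν ∗ ω)^ = ν̂ ω̂`, bi-zero sets of `ν` are bi-zero sets of `μ = ν ∗ ω`. If `Λ` were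
a spectrum of `μ`, Parseval's identity for `e_ξ` in `L²(μ)` would give
`∑_{λ ∈ Λ} |ν̂(λ - ξ)|² |ω̂(λ - ξ)|² = 1` for every `ξ`, while Bessel's inequality for the
orthonormal family `(e_λ)` in `L²(ν)` gives `∑_{λ ∈ Λ} |ν̂(λ - ξ)|² ≤ 1`. A non-Dirac `ω` has
`|ω̂| = 1` only on a countable set: `|ω̂(t)| = 1` forces `ω` to live on a coset of `t⁻¹ ℤ`, and
two such cosets with incommensurable periods meet in at most one point. So some `ξ` has
`|ω̂(λ - ξ)| < 1` for all `λ ∈ Λ`, and the two sums are incompatible. -/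

section Dirac

variable {α : Type*} [MeasurableSpace α] {μ : Measure α} [IsProbabilityMeasure μ]

lemma eq_dirac_of_ae_eq {a : α} (h : ∀ᵐ x ∂μ, x = a) : μ = Measure.dirac a :=
  calc μ = μ.map id := Measure.map_id.symm
    _ = μ.map (fun _ ↦ a) := Measure.map_congr h
    _ = Measure.dirac a := by simp [Measure.map_const]

lemma exists_ne_of_ae_of_forall_ne_dirac (hμ : ∀ a, μ ≠ Measure.dirac a) {p : α → Prop}
    (h : ∀ᵐ x ∂μ, p x) : ∃ x y, p x ∧ p y ∧ x ≠ y := by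
  obtain ⟨x, hx⟩ := h.exists
  by_contra! hne
  exact hμ x (eq_dirac_of_ae_eq (h.mono fun y hy ↦ hne y x hy hx))

end Dirac

lemma ae_cexp_eq_charFun_of_norm_charFun_eq_one {μ : Measure ℝ} [IsProbabilityMeasure μ]
    {t : ℝ} (h : ‖charFun μ t‖ = 1) : ∀ᵐ x : ℝ ∂μ, cexp (t * x * I) = charFun μ t := by
  have hnorm : ∀ x : ℝ, ‖cexp (t * x * I)‖ = 1 := fun x ↦ by
    exact_mod_cast Complex.norm_exp_ofReal_mul_I (t * x)
  rcases ae_eq_const_or_norm_integral_lt_of_norm_le_const (μ := μ)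
      (f := fun x : ℝ ↦ cexp (t * x * I)) (ae_of_all _ fun x ↦ (hnorm x).le) with hconst | hlt
  · simpa [average_eq_integral, ← charFun_apply_real, EventuallyEq] using hconst
  · rw [← charFun_apply_real] at hlt
    simp [h] at hlt

lemma exists_int_of_cexp_mul_I_eq {t x y : ℝ} (h : cexp (t * x * I) = cexp (t * y * I)) :
    ∃ n : ℤ, t * (x - y) = 2 * π * n := by
  obtain ⟨n, hn⟩ := Complex.exp_eq_exp_iff_exists_int.mp h
  refine ⟨n, ?_⟩
  have : ((t * (x - y) : ℝ) : ℂ) * I = ((2 * π * n : ℝ) : ℂ) * I := by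
    push_cast; linear_combination hn
  exact_mod_cast mul_right_cancel₀ I_ne_zero this

lemma countable_setOf_norm_charFun_eq_one {μ : Measure ℝ} [IsProbabilityMeasure μ]
    (hμ : ∀ a, μ ≠ Measure.dirac a) : {t : ℝ | ‖charFun μ t‖ = 1}.Countable := by
  set S := {t : ℝ | ‖charFun μ t‖ = 1}
  rcases S.subsingleton_or_nontrivial with hS | hS
  · exact hS.countable
  obtain ⟨t₀, ht₀, ht₀0⟩ := hS.exists_ne 0
  refine (Set.countable_range fun q : ℚ ↦ (q : ℝ) * t₀).mono fun t ht ↦ ?_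
  obtain ⟨x, y, ⟨hx, hx₀⟩, ⟨hy, hy₀⟩, hxy⟩ := exists_ne_of_ae_of_forall_ne_dirac hμ
    (p := fun x ↦ cexp (t * x * I) = charFun μ t ∧ cexp (t₀ * x * I) = charFun μ t₀)
    ((ae_cexp_eq_charFun_of_norm_charFun_eq_one ht).and
      (ae_cexp_eq_charFun_of_norm_charFun_eq_one ht₀))
  obtain ⟨n, hn⟩ := exists_int_of_cexp_mul_I_eq (hx.trans hy.symm)
  obtain ⟨m, hm⟩ := exists_int_of_cexp_mul_I_eq (hx₀.trans hy₀.symm)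
  have hm0 : (m : ℝ) ≠ 0 := by
    intro h0
    rw [h0, mul_zero] at hm
    exact mul_ne_zero ht₀0 (sub_ne_zero.mpr hxy) hm
  have hcomm : (2 * π) * (n * t₀ - m * t) = 0 := by linear_combination t * hm - t₀ * hn
  have hrat : n * t₀ = m * t :=
    sub_eq_zero.mp ((mul_eq_zero.mp hcomm).resolve_left (by positivity))
  refine ⟨n / m, ?_⟩
  dsimp only
  rw [Rat.cast_div, Rat.cast_intCast, Rat.cast_intCast, div_mul_eq_mul_div, div_eq_iff hm0, hrat,
    mul_comm]

lemma ft_eq_charFun (μ : Measure ℝ) (ξ : ℝ) : ft μ ξ = charFun μ (-(2 * π * ξ)) := by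
  rw [ft, charFun_apply_real]
  congr 1 with x
  push_cast
  ring_nf

lemma ft_conv (ν ω : Measure ℝ) [IsFiniteMeasure ν] [IsFiniteMeasure ω] (ξ : ℝ) :
    ft (ν.conv ω) ξ = ft ν ξ * ft ω ξ := by
  simp only [ft_eq_charFun]
  exact charFun_conv _

lemma ft_zero (μ : Measure ℝ) [IsProbabilityMeasure μ] : ft μ 0 = 1 := by
  simp [ft_eq_charFun]

lemma norm_ft_le_one (μ : Measure ℝ) [IsProbabilityMeasure μ] (ξ : ℝ) : ‖ft μ ξ‖ ≤ 1 := by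
  rw [ft_eq_charFun]
  exact norm_charFun_le_one _

lemma countable_setOf_norm_ft_eq_one {μ : Measure ℝ} [IsProbabilityMeasure μ]
    (hμ : ∀ a, μ ≠ Measure.dirac a) : {ξ : ℝ | ‖ft μ ξ‖ = 1}.Countable := by
  have hinj : Function.Injective fun ξ : ℝ ↦ -(2 * π * ξ) := fun ξ η h ↦ by
    simpa [Real.pi_ne_zero] using h
  refine ((countable_setOf_norm_charFun_eq_one hμ).preimage hinj).mono fun ξ hξ ↦ ?_
  simpa [ft_eq_charFun] using hξ

lemma exists_forall_norm_ft_sub_lt_one {μ : Measure ℝ} [IsProbabilityMeasure μ]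
    (hμ : ∀ a, μ ≠ Measure.dirac a) {Λ : Set ℝ} (hΛ : Λ.Countable) :
    ∃ ξ : ℝ, ∀ l ∈ Λ, ‖ft μ (l - ξ)‖ < 1 := by
  set bad := ⋃ l ∈ Λ, (l - ·) '' {ξ : ℝ | ‖ft μ ξ‖ = 1}
  have hbad : bad.Countable := hΛ.biUnion fun l _ ↦ (countable_setOf_norm_ft_eq_one hμ).image _
  obtain ⟨ξ, hξ⟩ := (hbad.dense_compl ℝ).nonempty
  refine ⟨ξ, fun l hl ↦ (norm_ft_le_one μ _).lt_of_ne fun h ↦ hξ ?_⟩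
  exact Set.mem_biUnion hl ⟨l - ξ, h, sub_sub_cancel l ξ⟩

def IsBiZeroSet (μ : Measure ℝ) (Λ : Set ℝ) : Prop :=
  ∀ l ∈ Λ, ∀ l' ∈ Λ, l ≠ l' → ft μ (l - l') = 0

lemma IsBiZeroSet.conv {ν : Measure ℝ} {Λ : Set ℝ} (h : IsBiZeroSet ν Λ) (ω : Measure ℝ)
    [IsFiniteMeasure ν] [IsFiniteMeasure ω] : IsBiZeroSet (ν.conv ω) Λ :=
  fun l hl l' hl' hne ↦ by rw [ft_conv, h l hl l' hl' hne, zero_mul]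

section Exponentials

variable (μ : Measure ℝ)

lemma memLp_cexp_mul_I [IsFiniteMeasure μ] (l : ℝ) :
    MemLp (fun x : ℝ ↦ cexp (2 * π * I * l * x)) 2 μ := by
  refine MemLp.of_bound (by fun_prop) 1 (ae_of_all _ fun x ↦ le_of_eq ?_)
  rw [show 2 * π * I * l * x = ((2 * π * l * x : ℝ) : ℂ) * I by push_cast; ring]
  exact Complex.norm_exp_ofReal_mul_I _

lemma expLp_eq_toLp [IsFiniteMeasure μ] (l : ℝ) :
    expLp μ l = (memLp_cexp_mul_I μ l).toLp _ :=
  dif_pos (memLp_cexp_mul_I μ l)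

lemma inner_expLp [IsFiniteMeasure μ] (a b : ℝ) :
    inner ℂ (expLp μ a) (expLp μ b) = ft μ (a - b) := by
  rw [expLp_eq_toLp, expLp_eq_toLp, L2.inner_def, ft]
  refine integral_congr_ae ?_
  filter_upwards [(memLp_cexp_mul_I μ a).coeFn_toLp, (memLp_cexp_mul_I μ b).coeFn_toLp]
    with x ha hb
  rw [ha, hb, RCLike.inner_apply, ← Complex.exp_conj, ← Complex.exp_add]
  congr 1
  simp only [map_mul, Complex.conj_I, Complex.conj_ofReal, map_ofNat]
  push_cast
  ring

lemma orthonormal_expLp [IsProbabilityMeasure μ] {Λ : Set ℝ} (hΛ : IsBiZeroSet μ Λ) :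
    Orthonormal ℂ fun l : Λ ↦ expLp μ l := by
  rw [orthonormal_iff_ite]
  rintro ⟨l, hl⟩ ⟨l', hl'⟩
  rw [inner_expLp]
  split_ifs with h
  · simp_all [ft_zero]
  · exact hΛ l hl l' hl' (fun h' ↦ h (Subtype.ext h'))

lemma norm_expLp [IsProbabilityMeasure μ] (ξ : ℝ) : ‖expLp μ ξ‖ = 1 := by
  rw [norm_eq_sqrt_re_inner (𝕜 := ℂ), inner_expLp, sub_self, ft_zero]
  simp

lemma hasSum_norm_ft_sq_of_isSpectrum [IsProbabilityMeasure μ] {Λ : Set ℝ}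
    (hΛ : IsSpectrum μ Λ) (ξ : ℝ) : HasSum (fun l : Λ ↦ ‖ft μ (l - ξ)‖ ^ 2) 1 := by
  obtain ⟨-, hON, hspan⟩ := hΛ
  have hParseval := (HilbertBasis.mk hON hspan).hasSum_inner_mul_inner (expLp μ ξ) (expLp μ ξ)
  rw [HilbertBasis.coe_mk, inner_expLp, sub_self, ft_zero] at hParseval
  rw [← Complex.hasSum_ofReal, Complex.ofReal_one]
  refine hParseval.congr_fun fun l ↦ ?_
  rw [← inner_conj_symm, inner_expLp, Complex.conj_mul']
  norm_cast

lemma summable_norm_ft_sq [IsProbabilityMeasure μ] {Λ : Set ℝ} (hΛ : IsBiZeroSet μ Λ) (ξ : ℝ) :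
    Summable fun l : Λ ↦ ‖ft μ (l - ξ)‖ ^ 2 := by
  simpa [inner_expLp] using (orthonormal_expLp μ hΛ).inner_products_summable (x := expLp μ ξ)

lemma tsum_norm_ft_sq_le_one [IsProbabilityMeasure μ] {Λ : Set ℝ} (hΛ : IsBiZeroSet μ Λ) (ξ : ℝ) :
    ∑' l : Λ, ‖ft μ (l - ξ)‖ ^ 2 ≤ 1 := by
  simpa [inner_expLp, norm_expLp] using
    (orthonormal_expLp μ hΛ).tsum_inner_products_le (expLp μ ξ)

end Exponentials

lemma not_isSpectrum_conv {ν ω : Measure ℝ} [IsProbabilityMeasure ν] [IsProbabilityMeasure ω]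
    (hω : ∀ a, ω ≠ Measure.dirac a) {Λ : Set ℝ} (hΛ : Λ.Countable) (hbz : IsBiZeroSet ν Λ) :
    ¬IsSpectrum (ν.conv ω) Λ := by
  intro hspec
  obtain ⟨ξ, hξ⟩ := exists_forall_norm_ft_sub_lt_one hω hΛ
  set a : Λ → ℝ := fun l ↦ ‖ft ν (l - ξ)‖ ^ 2
  have hParseval : HasSum (fun l : Λ ↦ a l * ‖ft ω (l - ξ)‖ ^ 2) 1 := by
    simpa only [ft_conv, norm_mul, mul_pow] using hasSum_norm_ft_sq_of_isSpectrum _ hspec ξ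
  by_cases hzero : ∀ l, a l = 0
  · simp only [hzero, zero_mul] at hParseval
    exact zero_ne_one (hasSum_zero.unique hParseval)
  obtain ⟨l₀, hl₀⟩ := not_forall.mp hzero
  have hle : ∀ l : Λ, a l * ‖ft ω (l - ξ)‖ ^ 2 ≤ a l := fun l ↦
    mul_le_of_le_one_right (by positivity) (pow_le_one₀ (norm_nonneg _) (hξ l l.2).le)
  have hlt : a l₀ * ‖ft ω (l₀ - ξ)‖ ^ 2 < a l₀ :=
    mul_lt_of_lt_one_right ((sq_nonneg _).lt_of_ne' hl₀)
      (pow_lt_one₀ (norm_nonneg _) (hξ l₀ l₀.2) two_ne_zero)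
  have hBessel := tsum_norm_ft_sq_le_one ν hbz ξ
  linarith [hasSum_lt hle hlt hParseval (summable_norm_ft_sq ν hbz ξ).hasSum]

theorem stmt_18_general (ν ω : Measure ℝ) (hν : IsProbabilityMeasure ν) (hω : IsProbabilityMeasure ω)
    (hωd : ∀ x : ℝ, ω ≠ Measure.dirac x)
    (Λ : Set ℝ) (hΛ : Λ.Countable)
    (hbz : ∀ l ∈ Λ, ∀ l' ∈ Λ, l ≠ l' → ft ν (l - l') = 0) :
    (∀ l ∈ Λ, ∀ l' ∈ Λ, l ≠ l' → ft (ν.conv ω) (l - l') = 0) ∧ ¬IsSpectrum (ν.conv ω) Λ := by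
  have := hν
  have := hω
  exact ⟨IsBiZeroSet.conv hbz ω, not_isSpectrum_conv hωd hΛ hbz⟩

theorem stmt_18 (ν ω : Measure ℝ) (hν : IsProbabilityMeasure ν) (hω : IsProbabilityMeasure ω)
    (hνc : ∃ K : Set ℝ, IsCompact K ∧ ν Kᶜ = 0) (hωc : ∃ K : Set ℝ, IsCompact K ∧ ω Kᶜ = 0)
    (hνd : ∀ x : ℝ, ν ≠ Measure.dirac x) (hωd : ∀ x : ℝ, ω ≠ Measure.dirac x)
    (Λ : Set ℝ) (hΛ : Λ.Countable)
    (hbz : ∀ l ∈ Λ, ∀ l' ∈ Λ, l ≠ l' → ft ν (l - l') = 0) :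
    (∀ l ∈ Λ, ∀ l' ∈ Λ, l ≠ l' → ft (ν.conv ω) (l - l') = 0) ∧ ¬IsSpectrum (ν.conv ω) Λ :=
  stmt_18_general ν ω hν hω hωd Λ hΛ hbz
end
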